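/- Let A ∈ ℝ^{n×n} with symmetric part A_sym := (A+Aᵀ)/2 positive definite, let ε > 0, and let U : ℝ → ℝ^{n×r} (1 ≤ r ≤ n) be differentiable on [0,∞) and satisfy the Oja flow ε·(d/dt)U(t) = (I_n − U(t)U(t)ᵀ)·A·U(t) for all t ≥ 0. If U(0) has full column rank r, then U(t) has full column rank r for every t ≥ 0. -/

import Mathlib

/-!
Track the Gram determinant `f t = det (U tᵀ * U t)`, which is positive exactly when `U t` has
full column rank. By Jacobi's formula and the Oja equation,
`ε f' = tr (adj (UᵀU) * Uᵀ (A + Aᵀ) U) - f * tr (Uᵀ (A + Aᵀ) U)`, and the first term is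
nonnegative as the trace of a product of two positive semidefinite matrices. Bounding
`tr (Uᵀ (A + Aᵀ) U) ≤ K` on a compact interval `[0, T]` gives `f' ≥ -(K / ε) f`, so by Grönwall
`f T ≥ f 0 * exp (-(K / ε) T) > 0`.
-/

open Matrix Finset Set
open scoped ComplexOrder

theorem mul_exp_le_of_neg_mul_le_deriv_right {f f' : ℝ → ℝ} {K a b : ℝ}
    (hf : ContinuousOn f (Icc a b)) (hf' : ∀ x ∈ Ico a b, HasDerivWithinAt f (f' x) (Ici x) x)
    (bound : ∀ x ∈ Ico a b, -(K * f x) ≤ f' x) :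
    ∀ x ∈ Icc a b, f a * Real.exp (-K * (x - a)) ≤ f x := by
  intro x hx
  have h := le_gronwallBound_of_liminf_deriv_right_le (f := -f) (f' := -f') (δ := -f a)
    (K := -K) (ε := 0) hf.neg (fun y hy r hr => (hf' y hy).neg.liminf_right_slope_le hr) le_rfl
    (fun y hy => by simp only [Pi.neg_apply, neg_mul_neg, add_zero]; linarith [bound y hy]) x hx
  rw [gronwallBound_ε0] at h
  simpa using h

namespace Matrix

section Determinant

variable {n α : Type*} [Fintype n] [DecidableEq n] [CommRing α]

theorem trace_adjugate_mul (A B : Matrix n n α) :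
    (A.adjugate * B).trace = ∑ j, (A.updateCol j fun i => B i j).det := by
  simp only [trace, diag_apply, mul_apply, ← cramer_apply, cramer_eq_adjugate_mulVec, mulVec,
    dotProduct]

theorem prod_updateCol_perm_apply (A : Matrix n n α) (j : n) (c : n → α) (σ : Equiv.Perm n) :
    ∏ i, A.updateCol j c (σ i) i = (∏ i ∈ univ.erase j, A (σ i) i) * c (σ j) := by
  rw [← Finset.mul_prod_erase _ _ (mem_univ j), updateCol_self, mul_comm]
  exact congrArg (· * _) (Finset.prod_congr rfl fun i hi => updateCol_ne (ne_of_mem_erase hi))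

theorem trace_adjugate_mul_sub_mul_sub_mul (G S X Y : Matrix n n α) :
    (G.adjugate * (S - X * G - G * Y)).trace = (G.adjugate * S).trace - G.det * (X + Y).trace := by
  have hX : (G.adjugate * (X * G)).trace = G.det * X.trace := by
    rw [trace_mul_comm, Matrix.mul_assoc, mul_adjugate, Matrix.mul_smul, Matrix.mul_one, trace_smul,
      smul_eq_mul]
  have hY : (G.adjugate * (G * Y)).trace = G.det * Y.trace := by
    rw [← Matrix.mul_assoc, adjugate_mul, Matrix.smul_mul, Matrix.one_mul, trace_smul, smul_eq_mul]
  rw [Matrix.mul_sub, Matrix.mul_sub, trace_sub, trace_sub, hX, hY, trace_add]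
  ring

end Determinant

section Derivative

variable {𝕜 : Type*} [NontriviallyNormedField 𝕜] {s : Set 𝕜} {x : 𝕜}

theorem hasDerivWithinAt_mul_apply {l m p : Type*} [Fintype m] {P : 𝕜 → Matrix l m 𝕜}
    {Q : 𝕜 → Matrix m p 𝕜} {P' : Matrix l m 𝕜} {Q' : Matrix m p 𝕜}
    (hP : ∀ i j, HasDerivWithinAt (fun t => P t i j) (P' i j) s x)
    (hQ : ∀ i j, HasDerivWithinAt (fun t => Q t i j) (Q' i j) s x) (i : l) (k : p) :
    HasDerivWithinAt (fun t => (P t * Q t) i k) ((P' * Q x + P x * Q') i k) s x := by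
  simp only [mul_apply, add_apply, ← Finset.sum_add_distrib]
  exact HasDerivWithinAt.fun_sum fun j _ => (hP i j).mul (hQ j k)

theorem hasDerivWithinAt_det {n : Type*} [Fintype n] [DecidableEq n] {F : 𝕜 → Matrix n n 𝕜}
    {F' : Matrix n n 𝕜} (hF : ∀ i j, HasDerivWithinAt (fun t => F t i j) (F' i j) s x) :
    HasDerivWithinAt (fun t => (F t).det) ((F x).adjugate * F').trace s x := by
  simp only [det_apply', trace_adjugate_mul, prod_updateCol_perm_apply]
  rw [Finset.sum_comm]
  refine HasDerivWithinAt.fun_sum fun σ _ => ?_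
  rw [← Finset.mul_sum]
  exact (HasDerivWithinAt.fun_finsetProd fun i _ => hF (σ i) i).const_mul _

end Derivative

section PosSemidef

variable {n 𝕜 : Type*} [Fintype n] [DecidableEq n] [RCLike 𝕜]

open scoped MatrixOrder in
theorem PosSemidef.adjugate {A : Matrix n n 𝕜} (hA : A.PosSemidef) : A.adjugate.PosSemidef := by
  obtain ⟨B, rfl⟩ := CStarAlgebra.nonneg_iff_eq_star_mul_self.mp hA.nonneg
  rw [star_eq_conjTranspose, adjugate_mul_distrib, ← adjugate_conjTranspose]
  exact posSemidef_self_mul_conjTranspose _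

open scoped MatrixOrder in
theorem PosSemidef.trace_mul_nonneg {A B : Matrix n n 𝕜} (hA : A.PosSemidef) (hB : B.PosSemidef) :
    0 ≤ (A * B).trace := by
  obtain ⟨C, rfl⟩ := CStarAlgebra.nonneg_iff_eq_star_mul_self.mp hA.nonneg
  rw [star_eq_conjTranspose, Matrix.mul_assoc, trace_mul_comm]
  exact (hB.mul_mul_conjTranspose_same C).trace_nonneg

theorem rank_eq_card_iff_isUnit {K : Type*} [Field K] {A : Matrix n n K} :
    A.rank = Fintype.card n ↔ IsUnit A := by
  refine ⟨fun h => ?_, rank_of_isUnit A⟩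
  rw [← mulVec_surjective_iff_isUnit, ← Matrix.coe_mulVecLin, ← LinearMap.range_eq_top]
  exact Submodule.eq_top_of_finrank_eq (by rw [← rank, h, Module.finrank_fintype_fun_eq_card])

theorem rank_eq_card_iff_det_transpose_mul_self_pos {m : Type*} [Fintype m] {U : Matrix m n ℝ} :
    U.rank = Fintype.card n ↔ 0 < (Uᵀ * U).det := by
  have hG : (Uᵀ * U).PosSemidef := by simpa using posSemidef_conjTranspose_mul_self U
  rw [← rank_transpose_mul_self, rank_eq_card_iff_isUnit, isUnit_iff_isUnit_det,
    isUnit_iff_ne_zero, hG.det_nonneg.lt_iff_ne']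

end PosSemidef

section Oja

variable {m k : Type*} [Fintype m] [Fintype k] [DecidableEq m]

theorem smul_gram_deriv_of_oja {A : Matrix m m ℝ} {U V : Matrix m k ℝ} {ε : ℝ}
    (h : ε • V = (1 - U * Uᵀ) * A * U) :
    ε • (Vᵀ * U + Uᵀ * V) =
      Uᵀ * (A + Aᵀ) * U - (Uᵀ * Aᵀ * U) * (Uᵀ * U) - (Uᵀ * U) * (Uᵀ * A * U) := by
  rw [smul_add, ← Matrix.smul_mul, ← transpose_smul, ← Matrix.mul_smul, h]
  simp only [transpose_mul, transpose_sub, transpose_transpose, Matrix.mul_sub, Matrix.sub_mul,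
    Matrix.mul_add, Matrix.add_mul, Matrix.one_mul, Matrix.mul_assoc]
  abel

theorem neg_det_mul_trace_le_of_oja [DecidableEq k] {A : Matrix m m ℝ} (hA : (A + Aᵀ).PosSemidef)
    {U V : Matrix m k ℝ} {ε : ℝ} (h : ε • V = (1 - U * Uᵀ) * A * U) :
    -((Uᵀ * U).det * (Uᵀ * (A + Aᵀ) * U).trace) ≤
      ε * ((Uᵀ * U).adjugate * (Vᵀ * U + Uᵀ * V)).trace := by
  have hG : (Uᵀ * U).PosSemidef := by simpa using posSemidef_conjTranspose_mul_self U
  have hS : (Uᵀ * (A + Aᵀ) * U).PosSemidef := by simpa using hA.conjTranspose_mul_mul_same U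
  have hsplit : Uᵀ * Aᵀ * U + Uᵀ * A * U = Uᵀ * (A + Aᵀ) * U := by
    rw [Matrix.mul_add, Matrix.add_mul, add_comm]
  rw [← smul_eq_mul (a := ε), ← trace_smul, ← Matrix.mul_smul, smul_gram_deriv_of_oja h,
    trace_adjugate_mul_sub_mul_sub_mul, hsplit]
  linarith [hG.adjugate.trace_mul_nonneg hS]

end Oja

end Matrix

theorem oja_flow_rank_preserved
    (n r : ℕ)
    (A : Matrix (Fin n) (Fin n) ℝ)
    (hA : (((2:ℝ)⁻¹) • (A + Aᵀ)).PosDef)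
    (ε : ℝ) (hε : 0 < ε)
    (U U' : ℝ → Matrix (Fin n) (Fin r) ℝ)
    (hderiv : ∀ t ∈ Set.Ici (0:ℝ), ∀ i j,
      HasDerivWithinAt (fun s => U s i j) (U' t i j) (Set.Ici (0:ℝ)) t)
    (hode : ∀ t ∈ Set.Ici (0:ℝ),
      ε • U' t = (1 - U t * (U t)ᵀ) * A * U t)
    (hrank0 : (U 0).rank = r) :
    ∀ t ∈ Set.Ici (0:ℝ), (U t).rank = r := by
  have hS : (A + Aᵀ).PosSemidef := by
    simpa [smul_smul] using (hA.smul (zero_lt_two' ℝ)).posSemidef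
  have hdet : ∀ t ∈ Ici (0:ℝ), HasDerivWithinAt (fun s => ((U s)ᵀ * U s).det)
      (((U t)ᵀ * U t).adjugate * ((U' t)ᵀ * U t + (U t)ᵀ * U' t)).trace (Ici 0) t :=
    fun t ht => hasDerivWithinAt_det
      (hasDerivWithinAt_mul_apply (fun i j => hderiv t ht j i) (hderiv t ht))
  have hU : ContinuousOn U (Ici 0) := continuousOn_pi.2 fun i => continuousOn_pi.2 fun j t ht =>
    (hderiv t ht i j).continuousWithinAt
  intro T hT
  obtain ⟨K, hK⟩ : ∃ K, ∀ t ∈ Icc 0 T, ((U t)ᵀ * (A + Aᵀ) * U t).trace ≤ K :=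
    (isCompact_Icc.bddAbove_image <|
      (by fun_prop : Continuous fun M : Matrix (Fin n) (Fin r) ℝ => (Mᵀ * (A + Aᵀ) * M).trace)
        |>.comp_continuousOn (hU.mono Icc_subset_Ici_self)).imp
      fun K hK t ht => hK ⟨t, ht, rfl⟩
  have hgrowth : ∀ t ∈ Ico 0 T, -(K / ε * ((U t)ᵀ * U t).det) ≤
      (((U t)ᵀ * U t).adjugate * ((U' t)ᵀ * U t + (U t)ᵀ * U' t)).trace := by
    intro t ht
    have hode_t := neg_det_mul_trace_le_of_oja hS (hode t ht.1)
    have hdet_nonneg : 0 ≤ ((U t)ᵀ * U t).det := by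
      simpa using (posSemidef_conjTranspose_mul_self (U t)).det_nonneg
    rw [div_mul_eq_mul_div, ← neg_div, div_le_iff₀ hε]
    linarith [mul_le_mul_of_nonneg_left (hK t (Ico_subset_Icc_self ht)) hdet_nonneg]
  have hlower := mul_exp_le_of_neg_mul_le_deriv_right
    (fun t ht => (hdet t ht.1).continuousWithinAt.mono Icc_subset_Ici_self)
    (fun t ht => (hdet t ht.1).mono (Ici_subset_Ici.2 ht.1)) hgrowth T ⟨hT, le_rfl⟩
  have hrank : ∀ t, (U t).rank = r ↔ 0 < ((U t)ᵀ * U t).det := fun t => by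
    simpa using rank_eq_card_iff_det_transpose_mul_self_pos (U := U t)
  exact (hrank T).2 ((mul_pos ((hrank 0).1 hrank0) (Real.exp_pos _)).trans_le hlower)
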